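/- arXiv:1909.13368 — 8 statements merged into one kernel-verified Lean document; each statement's English description precedes it below -/
import Mathlib

section
/- Suppose rank(W_A) = m. Let κ be uniformly distributed on F_q^k and let μ_1, …, μ_v be uniformly distributed on F_q^m, with κ, μ_1, …, μ_v mutually independent, and set c_i = μ_i·W_A + κ·W_{A^c} for i = 1, …, v. Then the tuple (c_1, …, c_v) is independent of κ; equivalently, reusing the same key for v independent uniform messages leaks no information about the key, I(κ; c_1, …, c_v) = 0. -/
/-- Key reuse.  Suppose `rank W_A = m`.  With `κ` uniform on `F^k` and
`μ₁, …, μ_v` uniform on `F^m`, all mutually independent, and `cᵢ = μᵢ·W_A + κ·W_{Aᶜ}`,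
the tuple `(c₁, …, c_v)` is independent of `κ` (i.e. `I(κ; c₁,…,c_v) = 0`).  Independence
under the uniform distribution on `(μ₁,…,μ_v, κ)` is expressed by counting: joint counts
factor into products of marginal counts. -/
theorem stmt_2 {F : Type} [Field F] [Fintype F] [DecidableEq F]
    (m k n v : ℕ) (hn : n = m + k)
    (W : Matrix (Fin n) (Fin m) F)
    (A : Finset (Fin n)) (hA : A.card = m)
    (hWA : (W.submatrix (Subtype.val : {i // i ∈ A} → Fin n) id).rank = m) :
    ∀ (cs : Fin v → (Fin m → F)) (κ : {i // i ∈ Aᶜ} → F),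
      (Finset.univ.filter
          (fun p : (Fin v → ({i // i ∈ A} → F)) × ({i // i ∈ Aᶜ} → F) =>
            (∀ i : Fin v,
              Matrix.vecMul (p.1 i) (W.submatrix (Subtype.val : {i // i ∈ A} → Fin n) id)
                + Matrix.vecMul p.2 (W.submatrix (Subtype.val : {i // i ∈ Aᶜ} → Fin n) id)
                = cs i) ∧ p.2 = κ)).card
        * Fintype.card ((Fin v → ({i // i ∈ A} → F)) × ({i // i ∈ Aᶜ} → F))
      = (Finset.univ.filter
          (fun p : (Fin v → ({i // i ∈ A} → F)) × ({i // i ∈ Aᶜ} → F) =>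
            ∀ i : Fin v,
              Matrix.vecMul (p.1 i) (W.submatrix (Subtype.val : {i // i ∈ A} → Fin n) id)
                + Matrix.vecMul p.2 (W.submatrix (Subtype.val : {i // i ∈ Aᶜ} → Fin n) id)
                = cs i)).card
        * (Finset.univ.filter
            (fun p : (Fin v → ({i // i ∈ A} → F)) × ({i // i ∈ Aᶜ} → F) =>
              p.2 = κ)).card := by
  intro cs κ
  set M := W.submatrix (Subtype.val : {i // i ∈ A} → Fin n) id with hM
  set M' := W.submatrix (Subtype.val : {i // i ∈ Aᶜ} → Fin n) id with hM'
  have hcard : Fintype.card {i // i ∈ A} = m := by simpa using hA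
  -- the map x ↦ x ᵥ* M is bijective
  have hsurj : Function.Surjective (Matrix.mulVecLin M.transpose) := by
    rw [← LinearMap.range_eq_top]
    apply Submodule.eq_top_of_finrank_eq
    have : (M.transpose).rank = m := by rw [Matrix.rank_transpose]; exact hWA
    rw [← Matrix.rank, this, Module.finrank_fintype_fun_eq_card,
      Fintype.card_fin]
  have hbij : Function.Bijective (fun x : {i // i ∈ A} → F => Matrix.vecMul x M) := by
    have : (fun x : {i // i ∈ A} → F => Matrix.vecMul x M)
        = Matrix.mulVecLin M.transpose := by
      funext x; simp [Matrix.mulVecLin_apply, Matrix.mulVec_transpose]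
    rw [this]
    refine (Fintype.bijective_iff_surjective_and_card _).2 ⟨hsurj, ?_⟩
    simp [hcard, hA]
  set e := Equiv.ofBijective _ hbij with he
  have heApp : ∀ x, e x = Matrix.vecMul x M := fun x => rfl
  -- the unique solution for a given key
  set sol : ({i // i ∈ Aᶜ} → F) → (Fin v → ({i // i ∈ A} → F)) × ({i // i ∈ Aᶜ} → F) :=
    fun κ' => (fun i => e.symm (cs i - Matrix.vecMul κ' M'), κ') with hsol
  have hchar : ∀ p : (Fin v → ({i // i ∈ A} → F)) × ({i // i ∈ Aᶜ} → F),
      (∀ i : Fin v, Matrix.vecMul (p.1 i) M + Matrix.vecMul p.2 M' = cs i)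
        ↔ p = sol p.2 := by
    intro p
    constructor
    · intro h
      have : p.1 = fun i => e.symm (cs i - Matrix.vecMul p.2 M') := by
        funext i
        rw [Equiv.eq_symm_apply, heApp]
        have := h i
        linear_combination (norm := module) this
      exact Prod.ext this rfl
    · intro h i
      have h1 : p.1 i = e.symm (cs i - Matrix.vecMul p.2 M') := by
        conv_lhs => rw [h]
      rw [h1]
      have := heApp (e.symm (cs i - Matrix.vecMul p.2 M'))
      rw [Equiv.apply_symm_apply] at this
      rw [← this]
      abel
  -- joint count = 1
  have hS1 : (Finset.univ.filter
      (fun p : (Fin v → ({i // i ∈ A} → F)) × ({i // i ∈ Aᶜ} → F) =>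
        (∀ i : Fin v, Matrix.vecMul (p.1 i) M + Matrix.vecMul p.2 M' = cs i)
          ∧ p.2 = κ)).card = 1 := by
    rw [Finset.card_eq_one]
    refine ⟨sol κ, ?_⟩
    ext p
    simp only [Finset.mem_filter, Finset.mem_univ, true_and, Finset.mem_singleton]
    constructor
    · rintro ⟨h1, h2⟩
      rw [(hchar p).1 h1, h2]
    · intro h
      subst h
      exact ⟨(hchar (sol κ)).2 rfl, rfl⟩
  -- ciphertext count = card of keys
  have hS2 : (Finset.univ.filter
      (fun p : (Fin v → ({i // i ∈ A} → F)) × ({i // i ∈ Aᶜ} → F) =>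
        ∀ i : Fin v, Matrix.vecMul (p.1 i) M + Matrix.vecMul p.2 M' = cs i)).card
      = Fintype.card ({i // i ∈ Aᶜ} → F) := by
    rw [← Finset.card_univ]
    refine Finset.card_bij' (fun p _ => p.2) (fun κ' _ => sol κ') ?_ ?_ ?_ ?_
    · intro p hp
      exact Finset.mem_univ _
    · intro κ' _
      simp only [Finset.mem_filter, Finset.mem_univ, true_and]
      exact (hchar (sol κ')).2 rfl
    · intro p hp
      simp only [Finset.mem_filter, Finset.mem_univ, true_and] at hp
      exact ((hchar p).1 hp).symm
    · intro κ' _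
      rfl
  -- key-marginal count = card of message tuples
  have hS3 : (Finset.univ.filter
      (fun p : (Fin v → ({i // i ∈ A} → F)) × ({i // i ∈ Aᶜ} → F) =>
        p.2 = κ)).card = Fintype.card (Fin v → ({i // i ∈ A} → F)) := by
    rw [← Finset.card_univ]
    refine Finset.card_bij' (fun p _ => p.1) (fun μ _ => (μ, κ)) ?_ ?_ ?_ ?_
    · intro p hp; exact Finset.mem_univ _
    · intro μ _
      simp only [Finset.mem_filter, Finset.mem_univ, true_and]
    · intro p hp
      simp only [Finset.mem_filter, Finset.mem_univ, true_and] at hp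
      obtain ⟨a, b⟩ := p
      cases hp
      rfl
    · intro μ _; rfl
  rw [hS1, hS2, hS3, one_mul, Fintype.card_prod, mul_comm]
end

section
/- Let G be an m×n matrix over F_q such that every nonzero x ∈ F_q^m satisfies wt(x·G) ≥ d, where d ≥ 1, and set W = G^T. Let u be uniformly distributed on F_q^n and let c = u·W ∈ F_q^m. Then for every set B ⊆ {1,…,n} with |B| ≤ d − 1, the random vector (u_i)_{i∈B} is independent of c; equivalently, H((u_i)_{i∈B} | c) = H((u_i)_{i∈B}), so the coding scheme with matrix W is t-threshold secure with t = d − 1. -/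
/-!
Write `E_B` for the rows of the identity matrix indexed by `B`. If `x ᵥ* G + w ᵥ* E_B = 0`, then
the codeword `x ᵥ* G` is supported in `B`, so it has weight at most `|B| < d` and `x = 0`, whence
`w = 0`. Thus the stacked matrix `[G; E_B]` has independent rows and the system `G u = 0`,
`u|_B = b` is solvable for every `b`: restriction to `B` maps the kernel of `u ↦ u ᵥ* Gᵀ` onto
`F^B`. For additive homomorphisms `f`, `g` with `f (ker g) = ⊤`, the map `(f, g)` is onto
`β × range g`, and comparing fiber sizes of the surjections `f`, `g` and `(f, g)` gives
`|{f = b, g = c}| · |α| = |{f = b}| · |{g = c}|`.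
-/

open Matrix Finset

namespace AddMonoidHom

variable {α β γ : Type*} [AddGroup α] [AddGroup β] [AddGroup γ] [Fintype α]
  [DecidableEq β] [DecidableEq γ]

theorem card_fiber_mul_card_of_surjective (f : α →+ β) (hf : Function.Surjective f) (b : β) :
    #{u | f u = b} * Nat.card β = Nat.card α := by
  have hker : Nat.card f.ker = #{u | f u = 0} := by
    simp [Nat.card_eq_fintype_card, Fintype.card_subtype]
  rw [card_fiber_eq_of_mem_range f (hf b) ⟨0, map_zero f⟩, ← hker, ← f.ker.card_mul_index,
    AddSubgroup.index_ker, range_eq_top.2 hf, AddSubgroup.card_top]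

theorem card_fiber_and_mul_card (f : α →+ β) (g : α →+ γ)
    (hfg : ∀ b, ∃ u, g u = 0 ∧ f u = b) (b : β) (c : γ) :
    #{u | f u = b ∧ g u = c} * Nat.card α = #{u | f u = b} * #{u | g u = c} := by
  by_cases hc : c ∈ Set.range g
  swap
  · have hempty : ∀ p : α → Prop, ∀ [DecidablePred p], (∀ u, p u → g u = c) → #{u | p u} = 0 :=
      fun p _ hp => card_eq_zero.2 <| filter_eq_empty_iff.2 fun u _ hu => hc ⟨u, hp u hu⟩
    rw [hempty _ fun u hu => hu.2, hempty _ fun u hu => hu, zero_mul, mul_zero]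
  have hf : Function.Surjective f := fun b => (hfg b).imp fun _ => And.right
  have hfg' : Function.Surjective (f.prod g.rangeRestrict) := by
    rintro ⟨b, c, u, rfl⟩
    obtain ⟨w, hw0, hwb⟩ := hfg (-f u + b)
    exact ⟨u + w, Prod.ext (by simp [hwb]) (Subtype.ext (by simp [hw0]))⟩
  have hboth := (f.prod g.rangeRestrict).card_fiber_mul_card_of_surjective hfg' (b, ⟨c, hc⟩)
  have hleft := f.card_fiber_mul_card_of_surjective hf b
  have hright :=
    g.rangeRestrict.card_fiber_mul_card_of_surjective g.rangeRestrict_surjective ⟨c, hc⟩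
  simp only [Nat.card_prod, prod_apply, Prod.mk.injEq, Subtype.ext_iff, coe_rangeRestrict]
    at hboth hright
  have hpos : 0 < Nat.card β * Nat.card g.range :=
    Nat.pos_of_mul_pos_left (hboth ▸ Nat.card_pos)
  refine Nat.eq_of_mul_eq_mul_right hpos ?_
  calc #{u | f u = b ∧ g u = c} * Nat.card α * (Nat.card β * Nat.card g.range)
      = Nat.card α * Nat.card α := by rw [← hboth]; ring
    _ = #{u | f u = b} * #{u | g u = c} * (Nat.card β * Nat.card g.range) := by
      nth_rw 1 [← hleft]; rw [← hright]; ring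

end AddMonoidHom

namespace Matrix

variable {K ι κ m : Type*} [Field K]

theorem mulVec_surjective_of_vecMul_injective [Fintype m] [Fintype ι] {A : Matrix m ι K}
    (h : Function.Injective A.vecMul) : Function.Surjective A.mulVec := by
  have hrank : Module.finrank K (LinearMap.range A.mulVecLin) = Module.finrank K (m → K) := by
    rw [Module.finrank_fintype_fun_eq_card, ← (vecMul_injective_iff.1 h).rank_matrix]
    rfl
  rw [← coe_mulVecLin, ← LinearMap.range_eq_top]
  exact Submodule.eq_top_of_finrank_eq hrank

variable [DecidableEq ι]

theorem one_submatrix_mulVec [Fintype ι] (f : m → ι) (u : ι → K) :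
    (1 : Matrix ι ι K).submatrix f id *ᵥ u = u ∘ f := by
  ext i
  simp [mulVec, dotProduct, one_apply]

theorem vecMul_one_submatrix [Fintype m] {f : m → ι} (hf : Function.Injective f) (w : m → K) :
    w ᵥ* (1 : Matrix ι ι K).submatrix f id = Function.extend f w 0 := by
  ext j
  by_cases hj : ∃ i, f i = j
  · obtain ⟨i, rfl⟩ := hj
    simp only [vecMul, dotProduct, submatrix_apply, id, one_apply, mul_ite, mul_one, mul_zero,
      hf.extend_apply]
    rw [Finset.sum_eq_single i (fun i' _ hi' => if_neg (hf.ne hi')) (by simp), if_pos rfl]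
  · rw [Function.extend_apply' _ _ _ hj]
    exact Finset.sum_eq_zero fun i _ => by
      simp [show f i ≠ j from fun h => hj ⟨i, h⟩]

variable [Fintype ι] [Fintype κ] [DecidableEq K]

theorem vecMul_fromRows_one_submatrix_injective (G : Matrix κ ι K) (s : Finset ι)
    (hG : ∀ x, x ≠ 0 → #s < hammingNorm (x ᵥ* G)) :
    Function.Injective (fromRows G ((1 : Matrix ι ι K).submatrix ((↑) : s → ι) id)).vecMul := by
  rw [← coe_vecMulLinear, injective_iff_map_eq_zero]
  intro v hv
  rw [vecMulLinear_apply, vecMul_fromRows, vecMul_one_submatrix Subtype.val_injective,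
    add_eq_zero_iff_eq_neg] at hv
  have hG0 : v ∘ Sum.inl = 0 := by
    by_contra hne
    have hsupp : ({j | (v ∘ Sum.inl ᵥ* G) j ≠ 0} : Finset ι) ⊆ s := by
      intro j hj
      by_contra hjs
      rw [mem_filter, hv, Pi.neg_apply, Function.extend_apply' _ _ _ (by simpa using hjs)] at hj
      simp at hj
    have := hG _ hne
    have : hammingNorm (v ∘ Sum.inl ᵥ* G) ≤ #s := card_le_card hsupp
    omega
  have hs0 : v ∘ Sum.inr = 0 := by
    ext i
    simpa [hG0, Subtype.val_injective.extend_apply] using congrFun hv i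
  ext (i | i)
  · exact congrFun hG0 i
  · exact congrFun hs0 i

theorem exists_mulVec_eq_zero_and_restrict_eq (G : Matrix κ ι K) (s : Finset ι)
    (hG : ∀ x, x ≠ 0 → #s < hammingNorm (x ᵥ* G)) (b : s → K) :
    ∃ u, G *ᵥ u = 0 ∧ u ∘ (↑) = b := by
  obtain ⟨u, hu⟩ := mulVec_surjective_of_vecMul_injective
    (vecMul_fromRows_one_submatrix_injective G s hG) (Sum.elim 0 b)
  rw [fromRows_mulVec, one_submatrix_mulVec] at hu
  exact ⟨u, congrArg (· ∘ Sum.inl) hu, congrArg (· ∘ Sum.inr) hu⟩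

end Matrix

/-- Threshold security from minimum distance.  Let `G` be an `m × n` matrix over
`F` with `wt(x·G) ≥ d` for every nonzero `x` (`d ≥ 1`), and set `W = Gᵀ`.  For `u` uniform on
`F^n` and `c = u·W`, for every set `B` of coordinates with `|B| ≤ d - 1`, the vector
`(uᵢ)_{i ∈ B}` is independent of `c` (so `H((uᵢ)_{i∈B} | c) = H((uᵢ)_{i∈B})`): the joint
counts factor into the product of the marginal counts. -/
theorem stmt_4 {F : Type} [Field F] [Fintype F] [DecidableEq F]
    (m n d : ℕ) (hd : 1 ≤ d)
    (G : Matrix (Fin m) (Fin n) F)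
    (hmin : ∀ x : Fin m → F, x ≠ 0 →
      d ≤ (Finset.univ.filter (fun j : Fin n => Matrix.vecMul x G j ≠ 0)).card) :
    ∀ B : Finset (Fin n), B.card ≤ d - 1 →
      ∀ (a : {i // i ∈ B} → F) (c : Fin m → F),
        (Finset.univ.filter (fun u : Fin n → F =>
            (fun i : {i // i ∈ B} => u i.1) = a ∧ Matrix.vecMul u Gᵀ = c)).card
          * Fintype.card (Fin n → F)
        = (Finset.univ.filter (fun u : Fin n → F =>
            (fun i : {i // i ∈ B} => u i.1) = a)).card
          * (Finset.univ.filter (fun u : Fin n → F => Matrix.vecMul u Gᵀ = c)).card := by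
  intro B hB a c
  have hG : ∀ x, x ≠ 0 → #B < hammingNorm (x ᵥ* G) := fun x hx =>
    (hB.trans_lt (Nat.sub_lt hd one_pos)).trans_le (hmin x hx)
  have hker : ∀ b : B → F, ∃ u, u ᵥ* Gᵀ = 0 ∧ u ∘ (↑) = b := by
    simpa only [vecMul_transpose] using exists_mulVec_eq_zero_and_restrict_eq G B hG
  rw [← Nat.card_eq_fintype_card]
  exact AddMonoidHom.card_fiber_and_mul_card
    (LinearMap.funLeft F F ((↑) : B → Fin n)).toAddMonoidHom Gᵀ.vecMulLinear.toAddMonoidHom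
    hker a c
end

section
/- Let G be an m×n matrix over F_q and suppose there exists x₀ ∈ F_q^m, x₀ ≠ 0, such that the codeword x₀·G has Hamming weight exactly d, with support F ⊆ {1,…,n}, |F| = d. Set W = G^T. Then for every u ∈ F_q^n the codeword c = u·W satisfies the linear relation Σ_{i=1}^{m} (x₀)_i c_i = Σ_{j∈F} (x₀·G)_j u_j, where (x₀·G)_j ≠ 0 for every j ∈ F. Consequently, if u is uniformly distributed on F_q^n, then the random vector (u_j)_{j∈F} is NOT independent of c; in particular the threshold security condition fails for the set F of size d, so t = d − 1 is the maximum threshold of the scheme when the code generated by G has minimum distance exactly d. -/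
/-!
Since `x₀ · (u Gᵀ) = (x₀ G) · u` and `x₀ G` vanishes off `Fs`, the codeword `c = u Gᵀ` determines
the combination `∑_{j ∈ Fs} (x₀ G)ⱼ uⱼ`. An input agreeing with the unit vector `e_{j₀}` on `Fs`
(`j₀ ∈ Fs`) makes that combination `(x₀ G)_{j₀} ≠ 0`, so it never encodes to `c = 0`, although both
events have positive probability: the joint count vanishes while the product of the marginal counts
does not.
-/

open Matrix Finset

section Counting

variable {α β γ : Type*} [Fintype α] [DecidableEq β] [DecidableEq γ]

theorem card_filter_and_mul_card_ne_mul_card (f : α → β) (g : α → γ) {b : β} {c : γ}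
    (hb : ∃ u, f u = b) (hc : ∃ u, g u = c) (hbc : ∀ u, f u = b → g u ≠ c) :
    #{u | f u = b ∧ g u = c} * Fintype.card α ≠ #{u | f u = b} * #{u | g u = c} := by
  have hjoint : #{u | f u = b ∧ g u = c} = 0 :=
    card_eq_zero.2 <| filter_eq_empty_iff.2 fun u _ h => hbc u h.1 h.2
  obtain ⟨ub, hub⟩ := hb
  obtain ⟨uc, huc⟩ := hc
  have hpos_b : 0 < #{u | f u = b} := card_pos.2 ⟨ub, by simpa using hub⟩
  have hpos_c : 0 < #{u | g u = c} := card_pos.2 ⟨uc, by simpa using huc⟩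
  rw [hjoint, zero_mul]
  exact (Nat.mul_pos hpos_b hpos_c).ne

end Counting

section Support

variable {ι R : Type*} [Fintype ι] [CommSemiring R]

theorem dotProduct_eq_sum_of_support_subset {w : ι → R} {s : Finset ι}
    (hs : ∀ j, w j ≠ 0 → j ∈ s) (u : ι → R) : w ⬝ᵥ u = ∑ j ∈ s, w j * u j :=
  (sum_subset (subset_univ s) fun j _ hj => by
    rw [not_imp_comm.1 (hs j) hj, zero_mul]).symm

theorem dotProduct_congr_of_support_subset {w : ι → R} {s : Finset ι}
    (hs : ∀ j, w j ≠ 0 → j ∈ s) {u v : ι → R} (huv : ∀ j ∈ s, u j = v j) :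
    w ⬝ᵥ u = w ⬝ᵥ v := by
  rw [dotProduct_eq_sum_of_support_subset hs, dotProduct_eq_sum_of_support_subset hs]
  exact sum_congr rfl fun j hj => by rw [huv j hj]

end Support

section Encoding

variable {m n R : Type*} [Fintype m] [Fintype n] [CommSemiring R]

theorem vecMul_transpose_ne_zero_of_eqOn_single [DecidableEq n] {x : m → R} {G : Matrix m n R}
    {s : Finset n} (hs : ∀ j, (x ᵥ* G) j ≠ 0 → j ∈ s) {j₀ : n} (hj₀ : (x ᵥ* G) j₀ ≠ 0)
    {u : n → R} (hu : ∀ j ∈ s, u j = (Pi.single j₀ 1 : n → R) j) : u ᵥ* Gᵀ ≠ 0 := by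
  intro hzero
  apply hj₀
  calc (x ᵥ* G) j₀ = x ᵥ* G ⬝ᵥ Pi.single j₀ 1 := by rw [dotProduct_single, mul_one]
    _ = x ᵥ* G ⬝ᵥ u := (dotProduct_congr_of_support_subset hs hu).symm
    _ = 0 := by rw [← dotProduct_vecMul_transpose, hzero, zero_dotProduct]

end Encoding

theorem stmt_5_general {F : Type} [Field F] [Fintype F] [DecidableEq F]
    (m n d : ℕ) (hd : 1 ≤ d)
    (G : Matrix (Fin m) (Fin n) F)
    (x₀ : Fin m → F)
    (Fs : Finset (Fin n)) (hFs : ∀ j : Fin n, j ∈ Fs ↔ Matrix.vecMul x₀ G j ≠ 0)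
    (hcard : Fs.card = d) :
    (∀ u : Fin n → F,
        ∑ i : Fin m, x₀ i * Matrix.vecMul u Gᵀ i
          = ∑ j ∈ Fs, Matrix.vecMul x₀ G j * u j)
    ∧ (∀ j ∈ Fs, Matrix.vecMul x₀ G j ≠ 0)
    ∧ ¬ (∀ (a : {j // j ∈ Fs} → F) (c : Fin m → F),
          (Finset.univ.filter (fun u : Fin n → F =>
              (fun j : {j // j ∈ Fs} => u j.1) = a ∧ Matrix.vecMul u Gᵀ = c)).card
            * Fintype.card (Fin n → F)
          = (Finset.univ.filter (fun u : Fin n → F =>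
              (fun j : {j // j ∈ Fs} => u j.1) = a)).card
            * (Finset.univ.filter (fun u : Fin n → F => Matrix.vecMul u Gᵀ = c)).card) := by
  have hsupp : ∀ j, (x₀ ᵥ* G) j ≠ 0 → j ∈ Fs := fun j => (hFs j).2
  refine ⟨fun u => (dotProduct_comm _ _).trans <| (dotProduct_vecMul_transpose G u x₀).trans
      (dotProduct_eq_sum_of_support_subset hsupp u), fun j hj => (hFs j).1 hj, fun hindep => ?_⟩
  obtain ⟨j₀, hj₀⟩ : Fs.Nonempty := card_pos.1 (by omega)
  have hwj₀ : (x₀ ᵥ* G) j₀ ≠ 0 := (hFs j₀).1 hj₀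
  exact card_filter_and_mul_card_ne_mul_card (fun u : Fin n → F => fun j : Fs => u j)
    (fun u => u ᵥ* Gᵀ) ⟨Pi.single j₀ 1, rfl⟩ ⟨0, zero_vecMul _⟩
    (fun u hu => vecMul_transpose_ne_zero_of_eqOn_single hsupp hwj₀ fun j hj =>
      congrFun hu ⟨j, hj⟩) (hindep _ 0)

/-- Tightness of the threshold.  Suppose some nonzero `x₀ ∈ F^m` produces a
codeword `x₀·G` of Hamming weight exactly `d ≥ 1`, with support `Fs`, `|Fs| = d`, and set
`W = Gᵀ`.  Then every encoder input `u` satisfies the linear relation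
`∑ᵢ (x₀)ᵢ cᵢ = ∑_{j ∈ Fs} (x₀·G)ⱼ uⱼ` (with all coefficients `(x₀·G)ⱼ`, `j ∈ Fs`, nonzero),
and consequently, for `u` uniform on `F^n`, the vector `(uⱼ)_{j ∈ Fs}` is NOT independent of
`c = u·W`: threshold security fails for the set `Fs` of size `d`, so `t = d - 1` is the
maximum threshold when the code has minimum distance exactly `d`. -/
theorem stmt_5 {F : Type} [Field F] [Fintype F] [DecidableEq F]
    (m n d : ℕ) (hd : 1 ≤ d)
    (G : Matrix (Fin m) (Fin n) F)
    (x₀ : Fin m → F) (hx₀ : x₀ ≠ 0)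
    (Fs : Finset (Fin n)) (hFs : ∀ j : Fin n, j ∈ Fs ↔ Matrix.vecMul x₀ G j ≠ 0)
    (hcard : Fs.card = d) :
    (∀ u : Fin n → F,
        ∑ i : Fin m, x₀ i * Matrix.vecMul u Gᵀ i
          = ∑ j ∈ Fs, Matrix.vecMul x₀ G j * u j)
    ∧ (∀ j ∈ Fs, Matrix.vecMul x₀ G j ≠ 0)
    ∧ ¬ (∀ (a : {j // j ∈ Fs} → F) (c : Fin m → F),
          (Finset.univ.filter (fun u : Fin n → F =>
              (fun j : {j // j ∈ Fs} => u j.1) = a ∧ Matrix.vecMul u Gᵀ = c)).card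
            * Fintype.card (Fin n → F)
          = (Finset.univ.filter (fun u : Fin n → F =>
              (fun j : {j // j ∈ Fs} => u j.1) = a)).card
            * (Finset.univ.filter (fun u : Fin n → F => Matrix.vecMul u Gᵀ = c)).card) :=
  stmt_5_general m n d hd G x₀ Fs hFs hcard
end

section
/- For any message length m and key length k with m > k ≥ 1, and any prime power q with q ≥ m + k + 1, there exists a proper t-threshold secure coding scheme over F_q with threshold t = k. Concretely, setting n = m + k and choosing pairwise distinct α_1, …, α_n ∈ F_q, the n×m matrix W with W(j, i) = α_j^{i−1} has the property that any m of its rows are linearly independent; hence for any choice of message index set A with |A| = m the scheme is proper (rank(W_A) = m and rank(W_{A^c}) = k), and for u uniformly distributed on F_q^n and any B ⊆ {1,…,n} with |B| ≤ k, the vector (u_i)_{i∈B} is independent of the codeword c = u·W. -/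
/-!
The rows of the matrix `α j ^ i` are Vandermonde vectors, so any `m` of them form an invertible
matrix once the `α j` are distinct. Every set of at most `m` rows is therefore linearly
independent, which gives the two rank statements. If `|B| ≤ k = n - m`, pick `m` rows outside
`B`: prescribing `u` on `B` arbitrarily, the coordinates of `u` on those rows can still be solved
for any codeword, so `u ↦ (u|_B, u W)` is a surjective homomorphism. All fibres of a surjective
homomorphism of finite groups have the same size, and this makes the counts factor.
-/

open Matrix Finset Function

namespace AddMonoidHom

variable {G H H₁ H₂ : Type*} [AddGroup G] [Fintype G]

lemma card_fiber_mul_card [AddGroup H] [Fintype H] [DecidableEq H] (f : G →+ H)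
    (hf : Surjective f) (x : H) : #{g | f g = x} * Fintype.card H = Fintype.card G := by
  calc #{g | f g = x} * Fintype.card H = ∑ y : H, #{g | f g = y} := by
        rw [sum_congr rfl fun y _ => card_fiber_eq_of_mem_range f (hf y) (hf x), sum_const,
          card_univ, smul_eq_mul, mul_comm]
    _ = Fintype.card G := (card_eq_sum_card_fiberwise fun g _ => mem_univ (f g)).symm

lemma card_fiber_and_mul_card_s9 [AddGroup H₁] [Fintype H₁] [DecidableEq H₁]
    [AddGroup H₂] [Fintype H₂] [DecidableEq H₂] (f₁ : G →+ H₁) (f₂ : G →+ H₂)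
    (hf : Surjective (f₁.prod f₂)) (a : H₁) (c : H₂) :
    #{g | f₁ g = a ∧ f₂ g = c} * Fintype.card G = #{g | f₁ g = a} * #{g | f₂ g = c} := by
  have h₁ := card_fiber_mul_card f₁ (fun x => (hf (x, 0)).imp fun _ h => congrArg Prod.fst h) a
  have h₂ := card_fiber_mul_card f₂ (fun x => (hf (0, x)).imp fun _ h => congrArg Prod.snd h) c
  have h := card_fiber_mul_card _ hf (a, c)
  simp only [prod_apply, Prod.ext_iff, Fintype.card_prod] at h
  have hpos : 0 < Fintype.card H₁ * Fintype.card H₂ :=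
    Nat.mul_pos Fintype.card_pos Fintype.card_pos
  refine Nat.eq_of_mul_eq_mul_right hpos ?_
  calc _ = #{g | f₁ g = a ∧ f₂ g = c} * (Fintype.card H₁ * Fintype.card H₂)
          * Fintype.card G := by ring
    _ = (#{g | f₁ g = a} * Fintype.card H₁) * (#{g | f₂ g = c} * Fintype.card H₂) := by
        rw [h, h₁, h₂]
    _ = _ := by ring

end AddMonoidHom

namespace Matrix

variable {ι κ F : Type*} [Fintype κ] [DecidableEq κ]

def RowsInGeneralPosition [CommRing F] (W : Matrix ι κ F) : Prop :=
  ∀ e : κ → ι, Injective e → IsUnit (W.submatrix e id)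

lemma rowsInGeneralPosition_pow [Field F] {m : ℕ} {α : ι → F} (hα : Injective α) :
    RowsInGeneralPosition (of fun j (i : Fin m) => α j ^ (i : ℕ)) := fun e he => by
  rw [isUnit_iff_isUnit_det, isUnit_iff_ne_zero]
  exact det_vandermonde_ne_zero_iff.mpr (hα.comp he)

variable [Field F] [Fintype ι] {W : Matrix ι κ F}

lemma RowsInGeneralPosition.linearIndependent_row_submatrix (hW : RowsInGeneralPosition W)
    {s : Finset ι} (hs : #s ≤ Fintype.card κ) (hκ : Fintype.card κ ≤ Fintype.card ι) :
    LinearIndependent F (W.submatrix ((↑) : s → ι) id).row := by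
  obtain ⟨t, hst, ht⟩ := Finset.exists_superset_card_eq hs hκ
  let e : κ ≃ t := Fintype.equivOfCardEq (by rw [Fintype.card_coe, ht])
  have hrows := linearIndependent_rows_of_isUnit
    (hW _ (Subtype.val_injective.comp e.injective))
  have hinj : Injective fun i : s => e.symm ⟨i, hst i.2⟩ := fun i j h =>
    Subtype.ext (congrArg (fun x : t => (x : ι)) (e.symm.injective h))
  have hrow : (W.submatrix ((↑) : s → ι) id).row =
      (W.submatrix ((↑) ∘ e) id).row ∘ fun i : s => e.symm ⟨i, hst i.2⟩ := by
    ext i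
    simp
  rw [hrow]
  exact hrows.comp _ hinj

lemma RowsInGeneralPosition.rank_submatrix (hW : RowsInGeneralPosition W)
    {s : Finset ι} (hs : #s ≤ Fintype.card κ) (hκ : Fintype.card κ ≤ Fintype.card ι) :
    (W.submatrix ((↑) : s → ι) id).rank = #s := by
  rw [(hW.linearIndependent_row_submatrix hs hκ).rank_matrix, Fintype.card_coe]

lemma RowsInGeneralPosition.surjective_restrict_prod_vecMul [DecidableEq ι]
    (hW : RowsInGeneralPosition W) {B : Finset ι} (hB : Fintype.card κ ≤ #Bᶜ) :
    Surjective fun u : ι → F => ((fun i : B => u i), u ᵥ* W) := by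
  rintro ⟨a, c⟩
  obtain ⟨C, hCB, hC⟩ := Finset.exists_subset_card_eq hB
  let e : κ ≃ C := Fintype.equivOfCardEq (by rw [Fintype.card_coe, hC])
  have he : Injective ((↑) ∘ e : κ → ι) := Subtype.val_injective.comp e.injective
  let u₀ : ι → F := fun j => if h : j ∈ B then a ⟨j, h⟩ else 0
  obtain ⟨w, hw⟩ := vecMul_surjective_iff_isUnit.mpr (hW _ he) (c - u₀ ᵥ* W)
  -- `v` places the coordinates of `w` on the rows `C`, which avoid `B`
  let v := w ᵥ* (1 : Matrix ι ι F).submatrix ((↑) ∘ e) id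
  refine ⟨u₀ + v, Prod.ext (funext fun i => ?_) ?_⟩
  · have hv : v i = 0 := by
      refine Finset.sum_eq_zero fun x _ => ?_
      have hne : (e x : ι) ≠ i := fun h => Finset.mem_compl.mp (hCB (h ▸ (e x).2)) i.2
      exact mul_eq_zero_of_right _ (one_apply_ne hne)
    simp [u₀, hv]
  · have hsel :
        (1 : Matrix ι ι F).submatrix ((↑) ∘ e) id * W = W.submatrix ((↑) ∘ e) id :=
      one_submatrix_mul _ (Equiv.refl ι) W
    simp only [add_vecMul, v, vecMul_vecMul, hsel, hw, add_sub_cancel]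

end Matrix

theorem stmt_9_general {F : Type} [Field F] [Fintype F] [DecidableEq F]
    (m k n : ℕ) (hkm : k < m) (hn : n = m + k)
    (hq : m + k + 1 ≤ Fintype.card F) :
    ∃ α : Fin n → F, Function.Injective α ∧
      ∀ W : Matrix (Fin n) (Fin m) F,
        (∀ (j : Fin n) (i : Fin m), W j i = α j ^ (i : ℕ)) →
        (∀ e : Fin m → Fin n, Function.Injective e → IsUnit (W.submatrix e id))
        ∧ (∀ A : Finset (Fin n), A.card = m →
            (W.submatrix (Subtype.val : {i // i ∈ A} → Fin n) id).rank = m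
            ∧ (W.submatrix (Subtype.val : {i // i ∈ Aᶜ} → Fin n) id).rank = k)
        ∧ (∀ B : Finset (Fin n), B.card ≤ k →
            ∀ (a : {i // i ∈ B} → F) (c : Fin m → F),
              (Finset.univ.filter (fun u : Fin n → F =>
                  (fun i : {i // i ∈ B} => u i.1) = a ∧ Matrix.vecMul u W = c)).card
                * Fintype.card (Fin n → F)
              = (Finset.univ.filter (fun u : Fin n → F =>
                  (fun i : {i // i ∈ B} => u i.1) = a)).card
                * (Finset.univ.filter (fun u : Fin n → F =>
                  Matrix.vecMul u W = c)).card) := by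
  subst hn
  obtain ⟨α⟩ := Function.Embedding.nonempty_of_card_le (α := Fin (m + k)) (β := F)
    (by rw [Fintype.card_fin]; omega)
  refine ⟨α, α.injective, fun W hW => ?_⟩
  have hgen : RowsInGeneralPosition W := Matrix.ext hW ▸ rowsInGeneralPosition_pow α.injective
  have hmn : Fintype.card (Fin m) ≤ Fintype.card (Fin (m + k)) := by
    rw [Fintype.card_fin, Fintype.card_fin]; omega
  refine ⟨hgen, fun A hA => ⟨?_, ?_⟩, fun B hB a c => ?_⟩
  · rw [hgen.rank_submatrix (by rw [hA, Fintype.card_fin]) hmn, hA]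
  · have hAc : #Aᶜ = k := by rw [card_compl, hA, Fintype.card_fin]; omega
    rw [hgen.rank_submatrix (by rw [hAc, Fintype.card_fin]; omega) hmn, hAc]
  · have hB' : Fintype.card (Fin m) ≤ #Bᶜ := by
      rw [card_compl, Fintype.card_fin, Fintype.card_fin]; omega
    exact AddMonoidHom.card_fiber_and_mul_card_s9
      (AddMonoidHom.mk' (fun u (i : B) => u i) fun _ _ => rfl)
      (vecMulLinear W).toAddMonoidHom (hgen.surjective_restrict_prod_vecMul hB') a c

/-- Existence of proper schemes with maximal threshold `t = k`.  For message
length `m`, key length `k` with `m > k ≥ 1`, `n = m + k`, and `q = |F| ≥ m + k + 1`, there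
exist pairwise distinct `α₁, …, α_n ∈ F` such that the `n × m` matrix `W(j, i) = α_j^(i-1)`
has any `m` of its rows linearly independent (every `m × m` row-submatrix is invertible);
hence for every message index set `A` with `|A| = m` the scheme is proper
(`rank W_A = m`, `rank W_{Aᶜ} = k`), and for `u` uniform on `F^n` and any `B` with `|B| ≤ k`,
the vector `(uᵢ)_{i ∈ B}` is independent of the codeword `c = u·W`. -/
theorem stmt_9 {F : Type} [Field F] [Fintype F] [DecidableEq F]
    (m k n : ℕ) (hk : 1 ≤ k) (hkm : k < m) (hn : n = m + k)
    (hq : m + k + 1 ≤ Fintype.card F) :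
    ∃ α : Fin n → F, Function.Injective α ∧
      ∀ W : Matrix (Fin n) (Fin m) F,
        (∀ (j : Fin n) (i : Fin m), W j i = α j ^ (i : ℕ)) →
        (∀ e : Fin m → Fin n, Function.Injective e → IsUnit (W.submatrix e id))
        ∧ (∀ A : Finset (Fin n), A.card = m →
            (W.submatrix (Subtype.val : {i // i ∈ A} → Fin n) id).rank = m
            ∧ (W.submatrix (Subtype.val : {i // i ∈ Aᶜ} → Fin n) id).rank = k)
        ∧ (∀ B : Finset (Fin n), B.card ≤ k →
            ∀ (a : {i // i ∈ B} → F) (c : Fin m → F),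
              (Finset.univ.filter (fun u : Fin n → F =>
                  (fun i : {i // i ∈ B} => u i.1) = a ∧ Matrix.vecMul u W = c)).card
                * Fintype.card (Fin n → F)
              = (Finset.univ.filter (fun u : Fin n → F =>
                  (fun i : {i // i ∈ B} => u i.1) = a)).card
                * (Finset.univ.filter (fun u : Fin n → F =>
                  Matrix.vecMul u W = c)).card) :=
  stmt_9_general m k n hkm hn hq
end

section
/- Let s ≥ 1 and 0 ≤ r ≤ s with s ≤ 2r + 1, and let F be the 2^s × 2^s matrix over F_2 with rows and columns indexed by subsets of {1,…,s} and entries F(S, T) = 1 if T ⊆ S and 0 otherwise. Then the submatrix of F with rows indexed by {S : |S| > r} and columns indexed by {T : |T| ≤ r} has full row rank over F_2, equal to Σ_{i=r+1}^{s} C(s, i); i.e., the key submatrix W_{A^c} of the Reed–Muller-based scheme has full row rank, so the scheme is proper. -/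
open Matrix

/-- The `2^s × 2^s` inclusion matrix over `F₂`: rows and columns indexed by subsets of
`{1, …, s}` (as `Finset (Fin s)`), entry `1` iff the column subset is contained in the row
subset.  This is the `s`-fold Kronecker power of the kernel `[[1,0],[1,1]]`. -/
def inclusionMatrix (s : ℕ) : Matrix (Finset (Fin s)) (Finset (Fin s)) (ZMod 2) :=
  Matrix.of fun S T => if T ⊆ S then 1 else 0

/-- Counting lemma: over `F₂`, the number of subsets of `X` contained in `Y` is
`2^{|X∩Y|}`, which is `1` iff `X ∩ Y = ∅`. -/
lemma sum_powerset_indicator {s : ℕ} (X Y : Finset (Fin s)) :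
    ∑ T ∈ X.powerset, (if T ⊆ Y then (1 : ZMod 2) else 0)
      = if X ∩ Y = ∅ then 1 else 0 := by
  rw [Finset.sum_boole]
  have h1 : X.powerset.filter (fun T => T ⊆ Y) = (X ∩ Y).powerset := by
    ext T
    simp only [Finset.mem_filter, Finset.mem_powerset, Finset.subset_inter_iff]
  rw [h1, Finset.card_powerset]
  rw [Nat.cast_pow]
  have h2 : ((2 : ℕ) : ZMod 2) = 0 := by decide
  rw [h2, zero_pow_eq]
  simp [Finset.card_eq_zero]

/-- `Sᶜ ∩ Y = ∅ ↔ Y ⊆ S`. -/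
lemma compl_inter_eq_empty_iff {s : ℕ} (S Y : Finset (Fin s)) :
    Sᶜ ∩ Y = ∅ ↔ Y ⊆ S := by
  simp only [Finset.eq_empty_iff_forall_notMem, Finset.mem_inter, Finset.mem_compl,
    Finset.subset_iff]
  constructor
  · intro h x hx
    by_contra hns
    exact h x ⟨hns, hx⟩
  · intro h x hx
    exact hx.1 (h hx.2)

/-- The key submatrix of the Reed–Muller-based scheme has full row rank: for
`s ≤ 2r + 1`, the submatrix of the inclusion matrix with rows indexed by `{S : |S| > r}` and
columns indexed by `{T : |T| ≤ r}` has rank `∑_{i=r+1}^{s} C(s,i)` over `F₂`, so the scheme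
is proper. -/
theorem stmt_11 (s r : ℕ) (hs : 1 ≤ s) (hr : r ≤ s) (hsr : s ≤ 2 * r + 1) :
    ((inclusionMatrix s).submatrix
        (Subtype.val : {S : Finset (Fin s) // r < S.card} → Finset (Fin s))
        (Subtype.val : {T : Finset (Fin s) // T.card ≤ r} → Finset (Fin s))).rank
      = ∑ i ∈ Finset.Icc (r + 1) s, Nat.choose s i := by
  classical
  set M := ((inclusionMatrix s).submatrix
        (Subtype.val : {S : Finset (Fin s) // r < S.card} → Finset (Fin s))
        (Subtype.val : {T : Finset (Fin s) // T.card ≤ r} → Finset (Fin s))) with hMdef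
  have hcard : ∀ S : Finset (Fin s), S.card ≤ s := by
    intro S
    simpa using Finset.card_le_univ S
  -- injectivity of the transpose (i.e. linear independence of rows of M)
  have hinj : Function.Injective (Mᵀ.mulVecLin) := by
    rw [← LinearMap.ker_eq_bot, LinearMap.ker_eq_bot']
    intro c hc
    have h0 : ∀ T : {T : Finset (Fin s) // T.card ≤ r},
        ∑ S : {S : Finset (Fin s) // r < S.card},
          c S * (if T.val ⊆ S.val then (1 : ZMod 2) else 0) = 0 := by
      intro T
      have := congrFun hc T
      simpa [Matrix.mulVecLin_apply, Matrix.mulVec, dotProduct, hMdef, inclusionMatrix,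
        Matrix.transpose_apply, mul_comm] using this
    -- key: for each row index S0, the sum of c over rows contained in S0 vanishes
    have hkey : ∀ S0 : {S : Finset (Fin s) // r < S.card},
        ∑ S : {S : Finset (Fin s) // r < S.card},
          c S * (if S.val ⊆ S0.val then (1 : ZMod 2) else 0) = 0 := by
      intro S0
      have hcompl : (S0.val)ᶜ.card ≤ r := by
        have h1 : (S0.val)ᶜ.card = s - S0.val.card := by
          rw [Finset.card_compl]; simp
        have h2 := hcard S0.val
        have h3 := S0.2
        omega
      have step1 : ∀ S : {S : Finset (Fin s) // r < S.card},
          (if S.val ⊆ S0.val then (1 : ZMod 2) else 0)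
            = ∑ T ∈ ((S0.val)ᶜ).powerset, (if T ⊆ S.val then (1 : ZMod 2) else 0) := by
        intro S
        rw [sum_powerset_indicator]
        simp only [compl_inter_eq_empty_iff]
      calc ∑ S : {S : Finset (Fin s) // r < S.card},
              c S * (if S.val ⊆ S0.val then (1 : ZMod 2) else 0)
          = ∑ S : {S : Finset (Fin s) // r < S.card},
              ∑ T ∈ ((S0.val)ᶜ).powerset, c S * (if T ⊆ S.val then (1 : ZMod 2) else 0) := by
            refine Finset.sum_congr rfl fun S _ => ?_
            rw [step1 S, Finset.mul_sum]
        _ = ∑ T ∈ ((S0.val)ᶜ).powerset, ∑ S : {S : Finset (Fin s) // r < S.card},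
              c S * (if T ⊆ S.val then (1 : ZMod 2) else 0) := Finset.sum_comm
        _ = 0 := by
            refine Finset.sum_eq_zero fun T hT => ?_
            have hTr : T.card ≤ r :=
              le_trans (Finset.card_le_card (Finset.mem_powerset.mp hT)) hcompl
            exact h0 ⟨T, hTr⟩
    -- downward induction: c vanishes
    have hzero : ∀ n (S : {S : Finset (Fin s) // r < S.card}), S.val.card ≤ n → c S = 0 := by
      intro n
      induction n with
      | zero => intro S hS; exact absurd (lt_of_lt_of_le S.2 hS) (Nat.not_lt_zero r)
      | succ n ih =>
        intro S hS
        have h1 := hkey S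
        have h2 : ∀ S' ∈ (Finset.univ : Finset {S : Finset (Fin s) // r < S.card}),
            S' ≠ S → c S' * (if S'.val ⊆ S.val then (1 : ZMod 2) else 0) = 0 := by
          intro S' _ hne
          by_cases hsub : S'.val ⊆ S.val
          · have hne' : S'.val ≠ S.val := fun h => hne (Subtype.ext h)
            have hlt : S'.val.card < S.val.card :=
              Finset.card_lt_card (lt_of_le_of_ne hsub hne')
            have : c S' = 0 := ih S' (by omega)
            simp [this]
          · simp [hsub]
        have h3 := Finset.sum_eq_single S h2 (by simp)
        rw [h1] at h3
        simpa using h3.symm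
    funext S
    exact hzero S.val.card S le_rfl
  -- compute the rank
  have h1 : M.rank = Mᵀ.rank := (Matrix.rank_transpose M).symm
  rw [h1, Matrix.rank, LinearMap.finrank_range_of_inj hinj,
    Module.finrank_fintype_fun_eq_card]
  -- count the rows
  rw [Fintype.card_subtype]
  have hset : (Finset.univ.filter fun S : Finset (Fin s) => r < S.card)
      = (Finset.Icc (r + 1) s).biUnion (fun i => Finset.powersetCard i Finset.univ) := by
    ext S
    simp only [Finset.mem_filter, Finset.mem_univ, true_and, Finset.mem_biUnion,
      Finset.mem_Icc, Finset.mem_powersetCard, Finset.subset_univ]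
    constructor
    · intro h
      exact ⟨S.card, ⟨by omega, hcard S⟩, rfl⟩
    · rintro ⟨i, ⟨h1, h2⟩, rfl⟩
      omega
  rw [hset, Finset.card_biUnion]
  · refine Finset.sum_congr rfl fun i _ => ?_
    rw [Finset.card_powersetCard]
    simp
  · intro i _ j _ hij
    exact Finset.pairwise_disjoint_powersetCard Finset.univ hij
end

section
/- Let s ≥ 1 and 0 ≤ r ≤ s, let F be the 2^s × 2^s inclusion matrix over F_2 (F(S, T) = 1 iff T ⊆ S), and let W be the 2^s × m submatrix of F keeping the columns indexed by {T : |T| ≤ r}, where m = Σ_{i=0}^{r} C(s, i). Let u be uniformly distributed on F_2^{2^s} and c = u·W. Then for every set B of input coordinates with |B| ≤ 2^{s−r} − 1, the vector (u_S)_{S∈B} is independent of c; i.e., the Reed–Muller-based coding scheme is t-threshold secure with t = 2^{s−r} − 1. -/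
open Matrix

/-- The `2^s × m` matrix `W` of the Reed–Muller-based scheme: the submatrix of the `s`-fold
Kronecker power of `[[1,0],[1,1]]` (the inclusion matrix `F(S,T) = 1` iff `T ⊆ S`) keeping
the columns indexed by subsets `T` with `|T| ≤ r`. -/
def rmW (s r : ℕ) :
    Matrix (Finset (Fin s)) {T : Finset (Fin s) // T.card ≤ r} (ZMod 2) :=
  Matrix.of fun S T => if T.1 ⊆ S then 1 else 0

/-!
`u ↦ ((u_S)_{S ∈ B}, u·W)` is a linear map from a finite group, so once it is surjective all its
fibres, and those of its two components, have the same size, and the fibre counts factor.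
Surjectivity is dual to injectivity of `(x, y) ↦ x + W y` with `x` supported on `B`; `W y` is the
Reed–Muller codeword `S ↦ ∑_{T ⊆ S} y_T`, so a nonzero `y` would give a codeword of weight at most
`|B| < 2^(s-r)`. That no such codeword exists is seen by taking `T₀` of maximal size with
`y_{T₀} ≠ 0`: for every `U` disjoint from `T₀`, summing the codeword over the cube
`{Q ∪ U : Q ⊆ T₀}` gives `y_{T₀}` in characteristic two, so each of the `2^(s-|T₀|)` cubes
meets the support.
-/

open Finset

namespace AddMonoidHom

variable {V X Y : Type*} [AddGroup V] [Fintype V]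

theorem card_fiber_mul_card_of_surjective_s13 [AddMonoid X] [Fintype X] [DecidableEq X] (φ : V →+ X)
    (hφ : Function.Surjective φ) (x : X) : #{u | φ u = x} * Fintype.card X = Fintype.card V :=
  calc #{u | φ u = x} * Fintype.card X = ∑ z : X, #{u | φ u = z} := by
        rw [sum_congr rfl fun z _ => card_fiber_eq_of_mem_range φ (hφ z) (hφ x), sum_const,
          card_univ, smul_eq_mul, mul_comm]
    _ = Fintype.card V := (card_eq_sum_card_fiberwise fun u _ => mem_univ (φ u)).symm

theorem card_filter_and_mul_card_eq_mul [AddMonoid X] [Fintype X] [DecidableEq X] [AddMonoid Y]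
    [Fintype Y] [DecidableEq Y] (f : V →+ X) (g : V →+ Y) (hfg : Function.Surjective (f.prod g))
    (x : X) (y : Y) :
    #{u | f u = x ∧ g u = y} * Fintype.card V = #{u | f u = x} * #{u | g u = y} := by
  have hjoint := card_fiber_mul_card_of_surjective_s13 _ hfg (x, y)
  have hf := card_fiber_mul_card_of_surjective_s13 f
    (fun x => (hfg (x, 0)).imp fun _ h => congrArg Prod.fst h) x
  have hg := card_fiber_mul_card_of_surjective_s13 g
    (fun y => (hfg (0, y)).imp fun _ h => congrArg Prod.snd h) y
  simp only [prod_apply, Prod.mk.injEq, Fintype.card_prod] at hjoint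
  refine Nat.eq_of_mul_eq_mul_right
    (Nat.mul_pos (Fintype.card_pos (α := X)) (Fintype.card_pos (α := Y))) ?_
  calc #{u | f u = x ∧ g u = y} * Fintype.card V * (Fintype.card X * Fintype.card Y)
      = Fintype.card V * Fintype.card V := by rw [mul_right_comm, hjoint]
    _ = #{u | f u = x} * Fintype.card X * (#{u | g u = y} * Fintype.card Y) := by rw [hf, hg]
    _ = #{u | f u = x} * #{u | g u = y} * (Fintype.card X * Fintype.card Y) := by ring

end AddMonoidHom

namespace Matrix

theorem vecMul_surjective_of_mulVec_injective {K m n : Type*} [Field K] [Fintype m] [Fintype n]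
    {M : Matrix m n K} (h : Function.Injective M.mulVec) : Function.Surjective (· ᵥ* M) := by
  have hrank : Mᵀ.rank = Fintype.card n := by
    rw [rank_transpose, rank, LinearMap.finrank_range_of_inj h, Module.finrank_fintype_fun_eq_card]
  have htop : LinearMap.range Mᵀ.mulVecLin = ⊤ :=
    Submodule.eq_top_of_finrank_eq (hrank.trans (Module.finrank_fintype_fun_eq_card K).symm)
  intro y
  obtain ⟨u, hu⟩ := LinearMap.range_eq_top.1 htop y
  exact ⟨u, (mulVec_transpose M u).symm.trans hu⟩

theorem surjective_restrict_prod_vecMul {K α n : Type*} [Field K] [Fintype α] [DecidableEq α]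
    [Fintype n] [DecidableEq K] (W : Matrix α n K) (B : Finset α)
    (hW : ∀ y ≠ 0, #B < #{S | (W *ᵥ y) S ≠ 0}) :
    Function.Surjective fun u : α → K => ((fun S : B => u S), u ᵥ* W) := by
  let P : Matrix α B K := of fun S b => if (b : α) = S then 1 else 0
  have hP_vecMul (u : α → K) : u ᵥ* P = fun b : B => u b := by
    ext b; simp [P, vecMul, dotProduct]
  have hP_mulVec_of_notMem (x : B → K) {S : α} (hS : S ∉ B) : (P *ᵥ x) S = 0 :=
    sum_eq_zero fun b _ => by simp [P, show (b : α) ≠ S from fun h => hS (h ▸ b.2)]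
  have hP_mulVec (x : B → K) (b : B) : (P *ᵥ x) b = x b := by
    simp [P, mulVec, dotProduct]
  have hinj : Function.Injective (fromCols P W).mulVecLin := by
    refine (injective_iff_map_eq_zero _).2 fun v hv => ?_
    rw [mulVecLin_apply, fromCols_mulVec] at hv
    have hy : v ∘ Sum.inr = 0 := by
      by_contra hne
      refine (hW _ hne).not_ge (card_le_card fun S hS => ?_)
      by_contra hSB
      have hWS := congrFun hv S
      rw [Pi.add_apply, hP_mulVec_of_notMem _ hSB, zero_add] at hWS
      exact (mem_filter.1 hS).2 hWS
    have hx : v ∘ Sum.inl = 0 := funext fun b => by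
      simpa [hy, hP_mulVec] using congrFun hv b
    ext (b | T)
    exacts [congrFun hx b, congrFun hy T]
  intro ⟨a, c⟩
  obtain ⟨u, hu⟩ := vecMul_surjective_of_mulVec_injective hinj (Sum.elim a c)
  dsimp only at hu
  rw [vecMul_fromCols, hP_vecMul, Sum.elim_eq_iff] at hu
  exact ⟨u, Prod.ext hu.1 hu.2⟩

end Matrix

namespace ReedMuller

variable {ι : Type*} [DecidableEq ι]

theorem sum_powerset_ite_subset_union_self {M : Type*} [AddCommMonoid M] {T₀ U : Finset ι}
    (h : Disjoint U T₀) (a : M) : ∑ Q ∈ T₀.powerset, (if T₀ ⊆ Q ∪ U then a else 0) = a := by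
  rw [sum_eq_single_of_mem T₀ (mem_powerset_self T₀) fun Q hQ hne => if_neg fun hsub => hne ?_,
    if_pos subset_union_left]
  exact (mem_powerset.1 hQ).antisymm (Disjoint.left_le_of_le_sup_right hsub h.symm)

theorem sum_powerset_ite_subset_union_eq_zero {R : Type*} [Ring R] [CharP R 2] {T₀ T : Finset ι}
    (h : ¬T₀ ⊆ T) (U : Finset ι) (a : R) :
    ∑ Q ∈ T₀.powerset, (if T ⊆ Q ∪ U then a else 0) = 0 := by
  obtain ⟨x, hxT₀, hxT⟩ := not_subset.1 h
  -- toggling `x ∈ Q` does not affect `T ⊆ Q ∪ U`, so the terms cancel in pairs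
  have toggle (Q : Finset ι) : T ⊆ symmDiff Q {x} ∪ U ↔ T ⊆ Q ∪ U := by
    simp only [subset_iff, mem_union, mem_symmDiff, mem_singleton]
    exact forall₂_congr fun y hy => by by_cases hyx : y = x <;> simp_all
  refine sum_involution (fun Q _ => symmDiff Q {x}) (fun Q _ => ?_) (fun Q _ _ => ?_)
    (fun Q hQ => ?_) (fun Q _ => symmDiff_symmDiff_cancel_right _ _)
  · simp only [toggle, CharTwo.add_self_eq_zero]
  · simp [symmDiff_eq_left]
  · rw [mem_powerset] at hQ ⊢
    exact symmDiff_le_sup.trans (union_subset hQ (singleton_subset_iff.2 hxT₀))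

variable [Fintype ι] {r : ℕ}

-- the evaluation of the multilinear polynomial `∑_T y_T ∏_{i ∈ T} X_i` at the indicator of `S`
def codeword {R : Type*} [AddCommMonoid R] (y : {T : Finset ι // #T ≤ r} → R) (S : Finset ι) :
    R :=
  ∑ T, if T.1 ⊆ S then y T else 0

variable {R : Type*} [Ring R] [CharP R 2]

theorem sum_powerset_codeword_union {y : {T : Finset ι // #T ≤ r} → R}
    {T₀ : {T : Finset ι // #T ≤ r}} (hmax : ∀ T, y T ≠ 0 → #T.1 ≤ #T₀.1) {U : Finset ι}
    (hU : Disjoint U T₀) : ∑ Q ∈ T₀.1.powerset, codeword y (Q ∪ U) = y T₀ := by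
  simp only [codeword]
  rw [sum_comm, sum_eq_single T₀ (fun T _ hT => ?_) (by simp),
    sum_powerset_ite_subset_union_self hU]
  by_cases hyT : y T = 0
  · simp [hyT]
  · refine sum_powerset_ite_subset_union_eq_zero (fun hsub => hT ?_) U _
    exact (Subtype.ext (eq_of_subset_of_card_le hsub (hmax T hyT))).symm

theorem two_pow_le_card_support_codeword [DecidableEq R] {y : {T : Finset ι // #T ≤ r} → R}
    (hy : y ≠ 0) : 2 ^ (Fintype.card ι - r) ≤ #{S | codeword y S ≠ 0} := by
  obtain ⟨T₀, hT₀, hmax⟩ := exists_max_image {T | y T ≠ 0} (fun T => #T.1)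
    (by simpa [filter_nonempty_iff, Function.ne_iff] using hy)
  simp only [mem_filter, mem_univ, true_and] at hT₀ hmax
  have hQ (U : Finset ι) (hU : U ∈ T₀.1ᶜ.powerset) :
      ∃ Q ∈ T₀.1.powerset, codeword y (Q ∪ U) ≠ 0 :=
    exists_ne_zero_of_sum_ne_zero <| by
      rwa [sum_powerset_codeword_union hmax (disjoint_compl_left.mono_left (mem_powerset.1 hU))]
  choose! Q hQT₀ hQ using hQ
  have hsdiff (U : Finset ι) (hU : U ∈ T₀.1ᶜ.powerset) : (Q U ∪ U) \ T₀.1 = U := by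
    rw [union_sdiff_distrib, sdiff_eq_empty_iff_subset.2 (mem_powerset.1 (hQT₀ U hU)),
      empty_union, sdiff_eq_self_of_disjoint (disjoint_compl_left.mono_left (mem_powerset.1 hU))]
  calc 2 ^ (Fintype.card ι - r) ≤ 2 ^ (Fintype.card ι - #T₀.1) :=
        Nat.pow_le_pow_right two_pos (Nat.sub_le_sub_left T₀.2 _)
    _ = #T₀.1ᶜ.powerset := by rw [card_powerset, card_compl]
    _ ≤ #{S | codeword y S ≠ 0} := by
      refine card_le_card_of_injOn (fun U => Q U ∪ U) (fun U hU => by simpa using hQ U hU) ?_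
      intro U hU V hV hUV
      rw [← hsdiff U hU, ← hsdiff V hV]
      exact congrArg (· \ T₀.1) hUV

end ReedMuller

theorem rmW_mulVec {s r : ℕ} (y : {T : Finset (Fin s) // #T ≤ r} → ZMod 2) :
    rmW s r *ᵥ y = ReedMuller.codeword y := by
  ext S
  simp [rmW, mulVec, dotProduct, ReedMuller.codeword]

theorem stmt_13_general (s r : ℕ) :
    ∀ B : Finset (Finset (Fin s)), B.card ≤ 2 ^ (s - r) - 1 →
      ∀ (a : {S // S ∈ B} → ZMod 2) (c : {T : Finset (Fin s) // T.card ≤ r} → ZMod 2),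
        (Finset.univ.filter (fun u : Finset (Fin s) → ZMod 2 =>
            (fun S : {S // S ∈ B} => u S.1) = a ∧ Matrix.vecMul u (rmW s r) = c)).card
          * Fintype.card (Finset (Fin s) → ZMod 2)
        = (Finset.univ.filter (fun u : Finset (Fin s) → ZMod 2 =>
            (fun S : {S // S ∈ B} => u S.1) = a)).card
          * (Finset.univ.filter (fun u : Finset (Fin s) → ZMod 2 =>
            Matrix.vecMul u (rmW s r) = c)).card := by
  intro B hB a c
  have hB' : #B < 2 ^ (s - r) := by have := Nat.one_le_two_pow (n := s - r); omega
  have hsurj := (rmW s r).surjective_restrict_prod_vecMul B fun y hy => by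
    have hweight := ReedMuller.two_pow_le_card_support_codeword hy
    rw [Fintype.card_fin] at hweight
    simpa [rmW_mulVec] using hB'.trans_le hweight
  exact AddMonoidHom.card_filter_and_mul_card_eq_mul
    (LinearMap.funLeft (ZMod 2) (ZMod 2) (Subtype.val : B → Finset (Fin s))).toAddMonoidHom
    (rmW s r).vecMulLinear.toAddMonoidHom hsurj a c

/-- Threshold security of the Reed–Muller-based scheme.  For `u` uniform on
`F₂^(2^s)` and `c = u·W`, for every set `B` of input coordinates with
`|B| ≤ 2^(s-r) - 1`, the vector `(u_S)_{S ∈ B}` is independent of `c`; i.e. the scheme is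
`t`-threshold secure with `t = 2^(s-r) - 1`.  Independence under the uniform distribution is
expressed by counting: joint counts factor into products of marginal counts. -/
theorem stmt_13 (s r : ℕ) (hs : 1 ≤ s) (hr : r ≤ s) :
    ∀ B : Finset (Finset (Fin s)), B.card ≤ 2 ^ (s - r) - 1 →
      ∀ (a : {S // S ∈ B} → ZMod 2) (c : {T : Finset (Fin s) // T.card ≤ r} → ZMod 2),
        (Finset.univ.filter (fun u : Finset (Fin s) → ZMod 2 =>
            (fun S : {S // S ∈ B} => u S.1) = a ∧ Matrix.vecMul u (rmW s r) = c)).card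
          * Fintype.card (Finset (Fin s) → ZMod 2)
        = (Finset.univ.filter (fun u : Finset (Fin s) → ZMod 2 =>
            (fun S : {S // S ∈ B} => u S.1) = a)).card
          * (Finset.univ.filter (fun u : Finset (Fin s) → ZMod 2 =>
            Matrix.vecMul u (rmW s r) = c)).card :=
  stmt_13_general s r
end

section
/- Let G be an m×n matrix over F_q such that every nonzero x ∈ F_q^m satisfies wt(x·G) ≥ t + 1, set W = G^T, and let A ⊆ {1,…,n} with |A| = m be such that rank(W_A) = m and rank(W_{A^c}) = k = n − m (the scheme is proper). Let G_r be an m×N matrix over F_q with full row rank m, and consider the concatenated encoder c = u·W·G_r ∈ F_q^N. Then: (i) for u uniformly distributed on F_q^n and every B ⊆ {1,…,n} with |B| ≤ t, the vector (u_i)_{i∈B} is independent of c (t-threshold security is preserved); and (ii) for μ uniform on F_q^m and κ uniform on F_q^k independent of μ, the codeword c = (μ·W_A + κ·W_{A^c})·G_r is independent of κ (key security is preserved). -/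
/-!
Both statements are instances of one counting fact: two additive maps `f, g` on a finite
group `V` with `ker f + ker g = V` are independent under the uniform distribution, since
then `(f, g)` maps onto the product of the images of `f` and `g`. For threshold security the
two maps are the restriction `u ↦ u|_B` and the encoder `u ↦ u W G_r`; the kernel condition
says that a vector of `ker G` can take any values on `B`, which holds because a nonzero
codeword of weight `≤ |B| ≤ t` cannot vanish off `B`. For key security they are the encoder
and the key `(μ, κ) ↦ κ`; since `W_A` has full column rank `μ` can be chosen to cancel `κ W_{Aᶜ}`.
-/

open Matrix Finset

def UniformIndep {V X Y : Type*} [Fintype V] [DecidableEq X] [DecidableEq Y]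
    (f : V → X) (g : V → Y) : Prop :=
  ∀ x y, #{v | f v = x ∧ g v = y} * Fintype.card V = #{v | f v = x} * #{v | g v = y}

theorem AddMonoidHom.uniformIndep_of_ker_sup_eq_top {V X Y : Type*} [AddCommGroup V] [Fintype V]
    [AddCommGroup X] [AddCommGroup Y] [DecidableEq X] [DecidableEq Y]
    (f : V →+ X) (g : V →+ Y) (hfg : f.ker ⊔ g.ker = ⊤) : UniformIndep f g := by
  intro c a
  choose σ hσ τ hτ hστ using fun d : V => AddSubgroup.mem_sup.1 (hfg ▸ AddSubgroup.mem_top d)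
  have hgσ (d : V) : g (σ d) = g d := by
    simpa [AddMonoidHom.mem_ker.1 (hτ d)] using congrArg g (hστ d)
  calc #{v | f v = c ∧ g v = a} * Fintype.card V
      = #(({v | f v = c ∧ g v = a} : Finset V) ×ˢ (univ : Finset V)) := by
        rw [card_product, card_univ]
    _ = #(({v | f v = c} : Finset V) ×ˢ ({v | g v = a} : Finset V)) := by
      -- shifting `x` by `σ (x - y) ∈ ker f` moves it into the `g`-fibre of `y`
      refine (card_nbij' (fun p => (p.1 - σ (p.1 - p.2), p.1 - p.2))
        (fun q => (q.1 + σ q.2, q.1 + σ q.2 - q.2)) ?_ ?_ ?_ ?_).symm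
      · intro p hp
        simp only [coe_product, coe_filter, mem_univ, true_and, Set.mem_prod, Set.mem_ofPred_eq,
          coe_univ, Set.mem_univ, and_true] at hp ⊢
        refine ⟨by rw [map_sub, AddMonoidHom.mem_ker.1 (hσ _), sub_zero, hp.1], ?_⟩
        rw [map_sub, hgσ, map_sub, hp.2]
        abel
      · intro q hq
        simp only [coe_product, coe_filter, mem_univ, true_and, Set.mem_prod, Set.mem_ofPred_eq,
          coe_univ, Set.mem_univ, and_true] at hq ⊢
        refine ⟨by rw [map_add, AddMonoidHom.mem_ker.1 (hσ _), add_zero, hq.1], ?_⟩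
        rw [map_sub, map_add, hgσ, hq.2]
        abel
      · intro p _
        ext <;> simp
      · intro q _
        ext <;> simp
    _ = #{v | f v = c} * #{v | g v = a} := card_product _ _

theorem Matrix.mulVec_surjective_of_rank_eq {F ι κ : Type*} [Field F] [Fintype ι] [Fintype κ]
    (M : Matrix ι κ F) (h : M.rank = Fintype.card ι) : Function.Surjective M.mulVec := by
  have : LinearMap.range M.mulVecLin = ⊤ :=
    Submodule.eq_top_of_finrank_eq (by rw [← Matrix.rank, h, Module.finrank_fintype_fun_eq_card])
  exact LinearMap.range_eq_top.1 this

theorem eq_zero_of_vecMul_eq_zero_off {R ι ν : Type*} [Semiring R] [DecidableEq R] [Fintype ι]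
    [Fintype ν] {G : Matrix ι ν R} {t : ℕ}
    (hmin : ∀ x : ι → R, x ≠ 0 → t + 1 ≤ #{j | (x ᵥ* G) j ≠ 0}) {B : Finset ν} (hB : #B ≤ t)
    {x : ι → R} (hx : ∀ j ∉ B, (x ᵥ* G) j = 0) : x = 0 := by
  by_contra hx0
  have hsupp : ({j | (x ᵥ* G) j ≠ 0} : Finset ν) ⊆ B := fun j hj => by
    by_contra hjB
    exact (mem_filter.1 hj).2 (hx j hjB)
  have := (hmin x hx0).trans (card_le_card hsupp)
  omega

theorem exists_mulVec_eq_zero_and_eq_on {F ι ν : Type*} [Field F] [DecidableEq F] [Fintype ι]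
    [Fintype ν] [DecidableEq ν] {G : Matrix ι ν F} {t : ℕ}
    (hmin : ∀ x : ι → F, x ≠ 0 → t + 1 ≤ #{j | (x ᵥ* G) j ≠ 0}) {B : Finset ν} (hB : #B ≤ t)
    (u : B → F) :
    ∃ w : ν → F, G *ᵥ w = 0 ∧ ∀ b : B, w b = u b := by
  set E : Matrix B ν F := of fun b => Pi.single (b : ν) 1
  have hE (y : B → F) (j : ν) : (y ᵥ* E) j = if h : j ∈ B then y ⟨j, h⟩ else 0 := by
    split_ifs with h
    · rw [vecMul, dotProduct, sum_eq_single ⟨j, h⟩]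
      · simp [E]
      · intro b _ hb
        simp [E, Subtype.ext_iff.not.1 hb]
      · simp
    · refine sum_eq_zero fun b _ => ?_
      simp [E, show j ≠ b from fun hjb => h (hjb ▸ b.2)]
  -- `w ↦ (G w, w|_B)` is onto because its transpose `(x, y) ↦ x G + y` is injective
  have hrows : Function.Injective (fromRows G E).vecMul := by
    rw [← coe_vecMulLinear, injective_iff_map_eq_zero]
    intro v hv
    rw [vecMulLinear_apply, vecMul_fromRows, add_eq_zero_iff_eq_neg] at hv
    have hG : v ∘ Sum.inl = 0 := eq_zero_of_vecMul_eq_zero_off hmin hB fun j hj => by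
      simp [hv, hE, hj]
    rw [hG, zero_vecMul, eq_comm, neg_eq_zero] at hv
    ext (i | b)
    · exact congrFun hG i
    · simpa [hE] using congrFun hv b
  obtain ⟨w, hw⟩ := (fromRows G E).mulVec_surjective_of_rank_eq
    (Matrix.vecMul_injective_iff.1 hrows).rank_matrix (Sum.elim 0 u)
  rw [fromRows_mulVec, Sum.elim_eq_iff] at hw
  refine ⟨w, hw.1, fun b => ?_⟩
  simpa [E, mulVec] using congrFun hw.2 b

theorem Matrix.uniformIndep_restrict_vecMul_vecMul {F ι ν κ : Type*} [Field F] [Fintype F]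
    [DecidableEq F] [Fintype ι] [Fintype ν] [DecidableEq ν] [Fintype κ] {G : Matrix ι ν F}
    {t : ℕ} (hmin : ∀ x : ι → F, x ≠ 0 → t + 1 ≤ #{j | (x ᵥ* G) j ≠ 0})
    {B : Finset ν} (hB : #B ≤ t) (Gr : Matrix ι κ F) :
    UniformIndep (fun u : ν → F => fun i : B => u i) (fun u => (u ᵥ* Gᵀ) ᵥ* Gr) := by
  set restrict : (ν → F) →ₗ[F] B → F := LinearMap.funLeft F F Subtype.val
  set encode := Gr.vecMulLinear ∘ₗ Gᵀ.vecMulLinear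
  refine restrict.toAddMonoidHom.uniformIndep_of_ker_sup_eq_top encode.toAddMonoidHom
    (eq_top_iff.2 fun u _ => ?_)
  obtain ⟨w, hGw, hwu⟩ := exists_mulVec_eq_zero_and_eq_on hmin hB fun b => u b
  refine AddSubgroup.mem_sup.2 ⟨u - w, ?_, w, ?_, sub_add_cancel u w⟩
  · ext b
    simp [restrict, hwu]
  · simp [encode, hGw]

theorem Matrix.uniformIndep_vecMul_add_vecMul_snd {F α β ι κ : Type*} [Field F] [Fintype F]
    [DecidableEq F] [Fintype α] [DecidableEq α] [Fintype β] [DecidableEq β] [Fintype ι] [Fintype κ]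
    {WA : Matrix α ι F} (hWA : WA.rank = Fintype.card ι) (WAc : Matrix β ι F)
    (Gr : Matrix ι κ F) :
    UniformIndep (fun p : (α → F) × (β → F) => (p.1 ᵥ* WA + p.2 ᵥ* WAc) ᵥ* Gr) Prod.snd := by
  set encode := Gr.vecMulLinear ∘ₗ WA.vecMulLinear.coprod WAc.vecMulLinear
  refine encode.toAddMonoidHom.uniformIndep_of_ker_sup_eq_top (AddMonoidHom.snd _ _)
    (eq_top_iff.2 fun p _ => ?_)
  obtain ⟨μ, hμ⟩ : ∃ μ, μ ᵥ* WA = -(p.2 ᵥ* WAc) := by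
    simpa only [← mulVec_transpose] using
      WAᵀ.mulVec_surjective_of_rank_eq (by rw [rank_transpose, hWA]) (-(p.2 ᵥ* WAc))
  refine AddSubgroup.mem_sup.2 ⟨(μ, p.2), ?_, (p.1 - μ, 0), rfl, ?_⟩
  · simp [encode, hμ]
  · ext <;> simp

theorem stmt_15_general {F : Type} [Field F] [Fintype F] [DecidableEq F]
    (m n N t : ℕ)
    (G : Matrix (Fin m) (Fin n) F)
    (hmin : ∀ x : Fin m → F, x ≠ 0 →
      t + 1 ≤ (Finset.univ.filter (fun j : Fin n => Matrix.vecMul x G j ≠ 0)).card)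
    (A : Finset (Fin n))
    (hWA : (Gᵀ.submatrix (Subtype.val : {i // i ∈ A} → Fin n) id).rank = m)
    (Gr : Matrix (Fin m) (Fin N) F) :
    (∀ B : Finset (Fin n), B.card ≤ t →
      ∀ (a : {i // i ∈ B} → F) (c : Fin N → F),
        (Finset.univ.filter (fun u : Fin n → F =>
            (fun i : {i // i ∈ B} => u i.1) = a
              ∧ Matrix.vecMul (Matrix.vecMul u Gᵀ) Gr = c)).card
          * Fintype.card (Fin n → F)
        = (Finset.univ.filter (fun u : Fin n → F =>
            (fun i : {i // i ∈ B} => u i.1) = a)).card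
          * (Finset.univ.filter (fun u : Fin n → F =>
            Matrix.vecMul (Matrix.vecMul u Gᵀ) Gr = c)).card)
    ∧ (∀ (c : Fin N → F) (κ : {i // i ∈ Aᶜ} → F),
        (Finset.univ.filter (fun p : ({i // i ∈ A} → F) × ({i // i ∈ Aᶜ} → F) =>
            Matrix.vecMul
              (Matrix.vecMul p.1 (Gᵀ.submatrix (Subtype.val : {i // i ∈ A} → Fin n) id)
                + Matrix.vecMul p.2 (Gᵀ.submatrix (Subtype.val : {i // i ∈ Aᶜ} → Fin n) id))
              Gr = c ∧ p.2 = κ)).card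
          * Fintype.card (({i // i ∈ A} → F) × ({i // i ∈ Aᶜ} → F))
        = (Finset.univ.filter (fun p : ({i // i ∈ A} → F) × ({i // i ∈ Aᶜ} → F) =>
            Matrix.vecMul
              (Matrix.vecMul p.1 (Gᵀ.submatrix (Subtype.val : {i // i ∈ A} → Fin n) id)
                + Matrix.vecMul p.2 (Gᵀ.submatrix (Subtype.val : {i // i ∈ Aᶜ} → Fin n) id))
              Gr = c)).card
          * (Finset.univ.filter (fun p : ({i // i ∈ A} → F) × ({i // i ∈ Aᶜ} → F) =>
              p.2 = κ)).card) := by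
  exact ⟨fun B hB => uniformIndep_restrict_vecMul_vecMul hmin hB Gr,
    uniformIndep_vecMul_add_vecMul_snd (hWA.trans (Fintype.card_fin m).symm) _ Gr⟩

/-- Concatenation preserves threshold and key security.  Let `G` be an
`m × n` matrix over `F` whose nonzero codewords have weight `≥ t + 1`, set `W = Gᵀ`, and let
`A` (`|A| = m`) be such that the scheme is proper (`rank W_A = m`, `rank W_{Aᶜ} = k`,
`k = n - m`).  Let `G_r` be a full-row-rank `m × N` inner generator matrix and consider the
concatenated encoder `c = u·W·G_r`.  Then (i) for `u` uniform on `F^n` and every `B` with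
`|B| ≤ t`, `(uᵢ)_{i ∈ B}` is independent of `c`; and (ii) for independent uniform `μ, κ`,
the codeword `c = (μ·W_A + κ·W_{Aᶜ})·G_r` is independent of `κ`.  Independence under the
uniform distribution is expressed by counting. -/
theorem stmt_15 {F : Type} [Field F] [Fintype F] [DecidableEq F]
    (m k n N t : ℕ) (hn : n = m + k)
    (G : Matrix (Fin m) (Fin n) F)
    (hmin : ∀ x : Fin m → F, x ≠ 0 →
      t + 1 ≤ (Finset.univ.filter (fun j : Fin n => Matrix.vecMul x G j ≠ 0)).card)
    (A : Finset (Fin n)) (hA : A.card = m)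
    (hWA : (Gᵀ.submatrix (Subtype.val : {i // i ∈ A} → Fin n) id).rank = m)
    (hWAc : (Gᵀ.submatrix (Subtype.val : {i // i ∈ Aᶜ} → Fin n) id).rank = k)
    (Gr : Matrix (Fin m) (Fin N) F) (hGr : Gr.rank = m) :
    (∀ B : Finset (Fin n), B.card ≤ t →
      ∀ (a : {i // i ∈ B} → F) (c : Fin N → F),
        (Finset.univ.filter (fun u : Fin n → F =>
            (fun i : {i // i ∈ B} => u i.1) = a
              ∧ Matrix.vecMul (Matrix.vecMul u Gᵀ) Gr = c)).card
          * Fintype.card (Fin n → F)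
        = (Finset.univ.filter (fun u : Fin n → F =>
            (fun i : {i // i ∈ B} => u i.1) = a)).card
          * (Finset.univ.filter (fun u : Fin n → F =>
            Matrix.vecMul (Matrix.vecMul u Gᵀ) Gr = c)).card)
    ∧ (∀ (c : Fin N → F) (κ : {i // i ∈ Aᶜ} → F),
        (Finset.univ.filter (fun p : ({i // i ∈ A} → F) × ({i // i ∈ Aᶜ} → F) =>
            Matrix.vecMul
              (Matrix.vecMul p.1 (Gᵀ.submatrix (Subtype.val : {i // i ∈ A} → Fin n) id)
                + Matrix.vecMul p.2 (Gᵀ.submatrix (Subtype.val : {i // i ∈ Aᶜ} → Fin n) id))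
              Gr = c ∧ p.2 = κ)).card
          * Fintype.card (({i // i ∈ A} → F) × ({i // i ∈ Aᶜ} → F))
        = (Finset.univ.filter (fun p : ({i // i ∈ A} → F) × ({i // i ∈ Aᶜ} → F) =>
            Matrix.vecMul
              (Matrix.vecMul p.1 (Gᵀ.submatrix (Subtype.val : {i // i ∈ A} → Fin n) id)
                + Matrix.vecMul p.2 (Gᵀ.submatrix (Subtype.val : {i // i ∈ Aᶜ} → Fin n) id))
              Gr = c)).card
          * (Finset.univ.filter (fun p : ({i // i ∈ A} → F) × ({i // i ∈ Aᶜ} → F) =>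
              p.2 = κ)).card) :=
  stmt_15_general m n N t G hmin A hWA Gr
end

section
/- Let s ≥ 1 and 0 ≤ r ≤ s with s ≤ 2r + 1. Let G(s, r) be the Reed–Muller generator matrix over F_2 (rows indexed by subsets T with |T| ≤ r, columns by all subsets S, entry 1 iff T ⊆ S), and consider the unified encoder u ↦ u·G(s, r)^T·G(s, r) for u ∈ F_2^{2^s}, with key coordinates A^c = {S : |S| > r} and message coordinates A = {S : |S| ≤ r}. Then for any u, u' ∈ F_2^{2^s} that agree on all coordinates in A^c (same key) and differ on A (distinct messages), the encodings u·G(s, r)^T·G(s, r) and u'·G(s, r)^T·G(s, r) differ in at least 2^{s−r} coordinates. Consequently, given the key, the message is uniquely determined by the codeword even after any ρ ≤ 2^{s−r} − 1 coordinates of the codeword are erased. -/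
/-!
Put `e = u - u'`: it vanishes on the key coordinates and is nonzero, so it has a support element
`T₀` of maximal cardinality, and `|T₀| ≤ r`. The encoding of `e` is the Reed–Muller codeword
`S ↦ ∑_{T ⊆ S} w T` with `w T = ∑_{S' ⊇ T} e S'` for `|T| ≤ r` (and `0` otherwise). Maximality of
`T₀` makes this triangular at `T₀`: `w T₀ = e T₀ ≠ 0` and `w` vanishes strictly above `T₀`.

Over `F₂` the sum of such a codeword over the subcube `{V ∪ U : V ⊆ T₀}` picks up exactly the
coefficients `w T` with `T \ U = T₀`, because an interval of the subset lattice has even size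
unless it is a singleton. For `U` disjoint from `T₀` only `T = T₀` survives, so each of the
`2 ^ (s - |T₀|)` disjoint subcubes contains a nonzero coordinate of the codeword.
-/

open Matrix

/-- The Reed–Muller generator matrix `G(s, r)` over `F₂`: rows indexed by subsets
`T ⊆ {1,…,s}` with `|T| ≤ r`, columns indexed by all subsets `S ⊆ {1,…,s}`, entry `1` iff
`T ⊆ S`. -/
def rmGen (s r : ℕ) :
    Matrix {T : Finset (Fin s) // T.card ≤ r} (Finset (Fin s)) (ZMod 2) :=
  Matrix.of fun T S => if T.1 ⊆ S then 1 else 0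

/-- The unified robust RM-based encoder `u ↦ u · G(s,r)ᵀ · G(s,r)`. -/
noncomputable def rmUnifiedEnc (s r : ℕ) (u : Finset (Fin s) → ZMod 2) :
    Finset (Fin s) → ZMod 2 :=
  Matrix.vecMul (Matrix.vecMul u (rmGen s r)ᵀ) (rmGen s r)

open Finset

section SubsetLattice

variable {α : Type*} [DecidableEq α]

theorem cast_card_filter_powerset_superset (A B : Finset α) :
    ((#{V ∈ B.powerset | A ⊆ V} : ℕ) : ZMod 2) = if A = B then 1 else 0 := by
  by_cases hAB : A ⊆ B
  · have hIcc : {V ∈ B.powerset | A ⊆ V} = Icc A B := by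
      ext V
      simp [and_comm]
    rw [hIcc, card_Icc_finset hAB]
    rcases hAB.eq_or_ssubset with rfl | hlt
    · simp
    · obtain ⟨k, hk⟩ := Nat.exists_eq_add_of_lt (card_lt_card hlt)
      rw [if_neg hlt.ne, show B.card - A.card = k + 1 by omega, pow_succ]
      push_cast
      rw [show (2 : ZMod 2) = 0 from rfl, mul_zero]
  · rw [if_neg (fun h => hAB h.subset), filter_false_of_mem, card_empty, Nat.cast_zero]
    exact fun V hV hAV => hAB (hAV.trans (mem_powerset.1 hV))

variable [Fintype α]

theorem sum_powerset_sum_powerset_union (w : Finset α → ZMod 2) (T₀ U : Finset α) :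
    ∑ V ∈ T₀.powerset, ∑ T ∈ (V ∪ U).powerset, w T = ∑ T with T \ U = T₀, w T := by
  calc ∑ V ∈ T₀.powerset, ∑ T ∈ (V ∪ U).powerset, w T
      = ∑ V ∈ T₀.powerset, ∑ T, if T \ U ⊆ V then w T else 0 := by
        refine sum_congr rfl fun V _ => ?_
        rw [← sum_filter]
        congr 1
        ext T
        simp only [mem_powerset, mem_filter, mem_univ, true_and]
        exact sdiff_le_iff'.symm
    _ = ∑ T, ∑ V ∈ T₀.powerset, if T \ U ⊆ V then w T else 0 := sum_comm
    _ = ∑ T, ((#{V ∈ T₀.powerset | T \ U ⊆ V} : ℕ) : ZMod 2) * w T := by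
        simp only [← sum_filter, sum_const, nsmul_eq_mul]
    _ = ∑ T with T \ U = T₀, w T := by
        simp only [cast_card_filter_powerset_superset, ite_mul, one_mul, zero_mul, sum_filter]

/-- The Reed–Muller minimum-distance bound, for the Boolean function `S ↦ ∑_{T ⊆ S} w T` with
algebraic normal form `w`. -/
theorem two_pow_le_card_sum_powerset_ne_zero (w : Finset α → ZMod 2) {T₀ : Finset α}
    (hT₀ : w T₀ ≠ 0) (hmax : ∀ T, T₀ ⊂ T → w T = 0) :
    2 ^ (Fintype.card α - T₀.card) ≤ #{S : Finset α | ∑ T ∈ S.powerset, w T ≠ 0} := by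
  have hcube : ∀ U, Disjoint U T₀ →
      ∃ S : Finset α, ∑ T ∈ S.powerset, w T ≠ 0 ∧ S \ T₀ = U := by
    intro U hU
    have hsum : ∑ V ∈ T₀.powerset, ∑ T ∈ (V ∪ U).powerset, w T = w T₀ := by
      rw [sum_powerset_sum_powerset_union]
      refine sum_eq_single_of_mem T₀ ?_ fun T hT hne => hmax T ?_
      · simpa [Finset.sdiff_eq_self_iff_disjoint] using hU.symm
      · rw [(mem_filter.1 hT).2.symm] at hne ⊢
        exact sdiff_subset.ssubset_of_ne hne.symm
    obtain ⟨V, hV, hne⟩ := exists_ne_zero_of_sum_ne_zero (hsum ▸ hT₀)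
    refine ⟨V ∪ U, hne, ?_⟩
    rw [union_sdiff_distrib, sdiff_eq_empty_iff_subset.2 (mem_powerset.1 hV), empty_union,
      Finset.sdiff_eq_self_iff_disjoint.2 hU]
  calc 2 ^ (Fintype.card α - T₀.card) = #T₀ᶜ.powerset := by
        rw [card_powerset, card_compl]
    _ ≤ #{S : Finset α | ∑ T ∈ S.powerset, w T ≠ 0} := by
        refine card_le_card_of_surjOn (· \ T₀) fun U hU => ?_
        obtain ⟨S, hS, rfl⟩ := hcube U (subset_compl_iff_disjoint_right.1 (mem_powerset.1 hU))
        exact ⟨S, by simpa using hS, rfl⟩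

end SubsetLattice

section ReedMuller

variable {s r : ℕ}

theorem rmUnifiedEnc_apply (u : Finset (Fin s) → ZMod 2) (S : Finset (Fin s)) :
    rmUnifiedEnc s r u S =
      ∑ T ∈ S.powerset, if T.card ≤ r then ∑ S' with T ⊆ S', u S' else 0 := by
  simp only [rmUnifiedEnc, vecMul, dotProduct, rmGen, transpose_apply, of_apply, mul_ite, mul_one,
    mul_zero, ← sum_filter]
  symm
  rw [← filter_subset_univ, filter_comm, sum_filter, sum_subtype _ mem_filter_univ, sum_filter]

theorem rmUnifiedEnc_sub (u u' : Finset (Fin s) → ZMod 2) :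
    rmUnifiedEnc s r (u - u') = rmUnifiedEnc s r u - rmUnifiedEnc s r u' := by
  simp only [rmUnifiedEnc, sub_vecMul]

theorem two_pow_le_card_rmUnifiedEnc_ne_zero {e : Finset (Fin s) → ZMod 2}
    (hkey : ∀ S : Finset (Fin s), r < S.card → e S = 0) (he : e ≠ 0) :
    2 ^ (s - r) ≤ #{S | rmUnifiedEnc s r e S ≠ 0} := by
  obtain ⟨T₀, hT₀, hT₀max⟩ := exists_max_image {S | e S ≠ 0} card
    (by simpa [Finset.Nonempty, funext_iff] using he)
  replace hT₀ : e T₀ ≠ 0 := (mem_filter_univ T₀).1 hT₀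
  have hT₀r : T₀.card ≤ r := not_lt.1 (mt (hkey T₀) hT₀)
  have he_above : ∀ S, T₀ ⊂ S → e S = 0 := fun S hS => by
    by_contra hne
    exact (card_lt_card hS).not_ge (hT₀max S ((mem_filter_univ S).2 hne))
  set w : Finset (Fin s) → ZMod 2 := fun T => if T.card ≤ r then ∑ S' with T ⊆ S', e S' else 0
  have hwT₀ : w T₀ = e T₀ := by
    simp only [w, if_pos hT₀r]
    refine sum_eq_single_of_mem T₀ ((mem_filter_univ T₀).2 subset_rfl) fun S hS hne => ?_
    exact he_above S (((mem_filter_univ S).1 hS).ssubset_of_ne hne.symm)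
  have hw_above : ∀ T, T₀ ⊂ T → w T = 0 := fun T hT => by
    simp only [w]
    split_ifs
    · exact sum_eq_zero fun S hS => he_above S (hT.trans_subset ((mem_filter_univ S).1 hS))
    · rfl
  simp only [rmUnifiedEnc_apply]
  calc 2 ^ (s - r) ≤ 2 ^ (Fintype.card (Fin s) - T₀.card) := by
        rw [Fintype.card_fin]
        exact Nat.pow_le_pow_right two_pos (by omega)
    _ ≤ _ := two_pow_le_card_sum_powerset_ne_zero w (hwT₀ ▸ hT₀) hw_above

theorem two_pow_le_card_rmUnifiedEnc_ne {u u' : Finset (Fin s) → ZMod 2}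
    (hkey : ∀ S : Finset (Fin s), r < S.card → u S = u' S) (hne : u ≠ u') :
    2 ^ (s - r) ≤ #{S | rmUnifiedEnc s r u S ≠ rmUnifiedEnc s r u' S} := by
  simpa [rmUnifiedEnc_sub, sub_eq_zero] using two_pow_le_card_rmUnifiedEnc_ne_zero
    (e := u - u') (fun S hS => sub_eq_zero.2 (hkey S hS)) (sub_ne_zero.2 hne)

end ReedMuller

theorem stmt_16_general (s r : ℕ) :
    (∀ u u' : Finset (Fin s) → ZMod 2,
      (∀ S : Finset (Fin s), r < S.card → u S = u' S) →
      (∃ S : Finset (Fin s), S.card ≤ r ∧ u S ≠ u' S) →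
      2 ^ (s - r) ≤ (Finset.univ.filter
        (fun S : Finset (Fin s) => rmUnifiedEnc s r u S ≠ rmUnifiedEnc s r u' S)).card)
    ∧ (∀ E : Finset (Finset (Fin s)), E.card ≤ 2 ^ (s - r) - 1 →
      ∀ u u' : Finset (Fin s) → ZMod 2,
        (∀ S : Finset (Fin s), r < S.card → u S = u' S) →
        (∀ S : Finset (Fin s), S ∉ E → rmUnifiedEnc s r u S = rmUnifiedEnc s r u' S) →
        u = u') := by
  refine ⟨fun u u' hkey ⟨S, _, hS⟩ =>
    two_pow_le_card_rmUnifiedEnc_ne hkey fun h => hS (congrFun h S), ?_⟩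
  intro E hE u u' hkey henc
  by_contra hne
  have hsubset : ({S | rmUnifiedEnc s r u S ≠ rmUnifiedEnc s r u' S} : Finset _) ⊆ E :=
    fun S hS => not_imp_comm.1 (henc S) ((mem_filter_univ S).1 hS)
  have hdist := (two_pow_le_card_rmUnifiedEnc_ne hkey hne).trans
    ((card_le_card hsubset).trans hE)
  have hpos := Nat.one_le_two_pow (n := s - r)
  omega

/-- Robustness of the unified RM-based encoder.  For `s ≤ 2r + 1`, any two
inputs `u, u'` agreeing on all key coordinates `A^c = {S : |S| > r}` (same key) but differing
on some message coordinate in `A = {S : |S| ≤ r}` (distinct messages) have encodings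
differing in at least `2^(s-r)` coordinates.  Consequently, given the key, the message is
uniquely determined by the codeword even after any set `E` of at most `2^(s-r) - 1`
coordinates of the codeword is erased. -/
theorem stmt_16 (s r : ℕ) (hs : 1 ≤ s) (hr : r ≤ s) (hsr : s ≤ 2 * r + 1) :
    (∀ u u' : Finset (Fin s) → ZMod 2,
      (∀ S : Finset (Fin s), r < S.card → u S = u' S) →
      (∃ S : Finset (Fin s), S.card ≤ r ∧ u S ≠ u' S) →
      2 ^ (s - r) ≤ (Finset.univ.filter
        (fun S : Finset (Fin s) => rmUnifiedEnc s r u S ≠ rmUnifiedEnc s r u' S)).card)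
    ∧ (∀ E : Finset (Finset (Fin s)), E.card ≤ 2 ^ (s - r) - 1 →
      ∀ u u' : Finset (Fin s) → ZMod 2,
        (∀ S : Finset (Fin s), r < S.card → u S = u' S) →
        (∀ S : Finset (Fin s), S ∉ E → rmUnifiedEnc s r u S = rmUnifiedEnc s r u' S) →
        u = u') :=
  stmt_16_general s r
end
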